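/- arXiv:1304.5822 — 2 statements merged into one kernel-verified Lean document; each statement's English description precedes it below -/
import Mathlib

section
/- Fix i ∈ {1,…,n} and let d_i' satisfy d_i < d_i' < d_0. Let x* be the unique fixed point of the instance with values (d_0, d_1,…,d_i,…,d_n) and x*' the unique fixed point of the instance where d_i is replaced by d_i' (all other values unchanged). Then x*'_j > x*_j for every j = 1,…,i; consequently the value reaching node i strictly increases: w*'_i = d_0·∏_{j=1}^{i} x*'_j > d_0·∏_{j=1}^{i} x*_j = w*_i. -/
/-!
Write `w_k` for the value reaching node `k` and `ν_k` for the share node `k` passes on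
(`ν_k = x_{k+1}`, `ν_n = 0`). Dividing the bargaining equation at node `k + 1` by `w_{k+1}` gives
`1 / x_{k+1} = 1 + (1 - ν_{k+1}) (1 - d_{k+1} / w_{k+1})` and `w_k = w_{k+1} / x_{k+1}`: a backward
recursion for `(w_k, ν_k)` which is monotone, since a smaller `w_{k+1}`, a larger `ν_{k+1}` and a
larger value `d_{k+1}` give a larger share `x_{k+1}` and a smaller `w_k`.

If raising `d_i` did not raise `w_n`, running the recursion down from `n` would give `w_0' < w_0`,
although both equal `d_0`. So `w_n < w_n'`, and the recursion carries this down to `w_i < w_i'`.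
Below `i` the values agree. There `w_j < w_j'` forces `x_j < x_j'` (otherwise `x_j' ≤ x_j` and
`w_j < w_j'` would persist down to the root, where `w_0 = w_0'`), while `w_j' ≤ w_j` turns
`x_{j+1} < x_{j+1}'` into `x_j < x_j'`; a downward induction from `i` gives every `x_j < x_j'`.
-/

/-- `pathW d x i` is the value `w_i = d_0 · ∏_{j=1}^{i} x_j` reaching node `i`
in a path bargaining instance with values `d` and shares `x`. -/
noncomputable def pathW (d x : ℕ → ℝ) (i : ℕ) : ℝ :=
  d 0 * ∏ j ∈ Finset.Icc 1 i, x j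

/-- A share vector: `x_i ∈ [0,1]` for `i = 1,…,n`. -/
def IsShareVector (n : ℕ) (x : ℕ → ℝ) : Prop :=
  ∀ i, 1 ≤ i → i ≤ n → 0 ≤ x i ∧ x i ≤ 1

/-- A fixed point of the path bargaining equations
`(1 − x_i)·w_{i−1} = (1 − x_{i+1})·(x_i·w_{i−1} − d_i)` for `i = 1,…,n`,
with the convention `x_{n+1} = 0`. -/
def IsPathFixedPoint (n : ℕ) (d x : ℕ → ℝ) : Prop :=
  IsShareVector n x ∧
  ∀ i, 1 ≤ i → i ≤ n →
    (1 - x i) * pathW d x (i - 1) =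
      (1 - (if i = n then 0 else x (i + 1))) * (x i * pathW d x (i - 1) - d i)

def IsPathInstance (n : ℕ) (d : ℕ → ℝ) : Prop :=
  0 < d 0 ∧ ∀ j, 1 ≤ j → j ≤ n → 0 ≤ d j ∧ d j < d 0

def nextShare (n : ℕ) (x : ℕ → ℝ) (k : ℕ) : ℝ :=
  if k = n then 0 else x (k + 1)

@[simp] lemma nextShare_self (n : ℕ) (x : ℕ → ℝ) : nextShare n x n = 0 :=
  if_pos rfl

lemma nextShare_of_lt {n k : ℕ} (x : ℕ → ℝ) (hk : k < n) : nextShare n x k = x (k + 1) :=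
  if_neg hk.ne

@[simp] lemma pathW_zero (d x : ℕ → ℝ) : pathW d x 0 = d 0 := by
  simp [pathW]

lemma pathW_succ (d x : ℕ → ℝ) (k : ℕ) : pathW d x (k + 1) = pathW d x k * x (k + 1) := by
  rw [pathW, pathW, Finset.prod_Icc_succ_top (by omega), mul_assoc]

namespace IsPathFixedPoint

variable {n : ℕ} {d x : ℕ → ℝ}

lemma share_mem_Icc (hx : IsPathFixedPoint n d x) {k : ℕ} (hk : k < n) :
    x (k + 1) ∈ Set.Icc 0 1 :=
  hx.1 (k + 1) (by omega) hk

lemma nextShare_mem_Icc (hx : IsPathFixedPoint n d x) {k : ℕ} (hk : k ≤ n) :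
    nextShare n x k ∈ Set.Icc 0 1 := by
  rcases hk.eq_or_lt with rfl | hk
  · simp
  · rw [nextShare_of_lt x hk]
    exact hx.share_mem_Icc hk

lemma bargaining_eq_succ (hx : IsPathFixedPoint n d x) {k : ℕ} (hk : k < n) :
    (1 - x (k + 1)) * pathW d x k =
      (1 - nextShare n x (k + 1)) * (pathW d x (k + 1) - d (k + 1)) := by
  have h := hx.2 (k + 1) (by omega) hk
  rw [Nat.add_sub_cancel] at h
  rw [pathW_succ]
  exact h.trans (by unfold nextShare; ring)

lemma share_pos_of_pathW_pos (hd : IsPathInstance n d) (hx : IsPathFixedPoint n d x) {k : ℕ}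
    (hk : k < n) (hw : 0 < pathW d x k) : 0 < x (k + 1) := by
  refine (hx.share_mem_Icc hk).1.lt_of_ne' fun h0 => ?_
  have h := hx.bargaining_eq_succ hk
  rw [pathW_succ, h0] at h
  nlinarith [(hx.nextShare_mem_Icc (k := k + 1) hk).2, (hd.2 (k + 1) (by omega) hk).1]

lemma pathW_pos (hd : IsPathInstance n d) (hx : IsPathFixedPoint n d x) {k : ℕ} (hk : k ≤ n) :
    0 < pathW d x k := by
  induction k with
  | zero => simpa using hd.1
  | succ k ih =>
    have hw := ih (by omega)
    rw [pathW_succ]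
    exact mul_pos hw (hx.share_pos_of_pathW_pos hd (by omega) hw)

lemma share_pos (hd : IsPathInstance n d) (hx : IsPathFixedPoint n d x) {k : ℕ} (hk : k < n) :
    0 < x (k + 1) :=
  hx.share_pos_of_pathW_pos hd hk (hx.pathW_pos hd hk.le)

lemma pathW_eq_of_share_eq_one (hd : IsPathInstance n d) (hx : IsPathFixedPoint n d x) {k : ℕ}
    (hk : k < n) (h1 : x (k + 1) = 1) : pathW d x (k + 1) = d 0 := by
  induction k with
  | zero => simp [pathW_succ, h1]
  | succ k ih =>
    have h := hx.bargaining_eq_succ (k := k) (by omega)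
    rw [nextShare_of_lt x hk, h1, sub_self, zero_mul] at h
    have hk1 : x (k + 1) = 1 := by
      have := (mul_eq_zero.1 h).resolve_right (hx.pathW_pos hd (k := k) (by omega)).ne'
      linarith
    rw [pathW_succ, ih (by omega) hk1, h1, mul_one]

lemma nextShare_eq_one_of_share_eq_one (hd : IsPathInstance n d) (hx : IsPathFixedPoint n d x)
    {k : ℕ} (hk : k < n) (h1 : x (k + 1) = 1) : nextShare n x (k + 1) = 1 := by
  have h := hx.bargaining_eq_succ hk
  rw [hx.pathW_eq_of_share_eq_one hd hk h1, h1, sub_self, zero_mul] at h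
  have := (mul_eq_zero.1 h.symm).resolve_right (sub_ne_zero.2 (hd.2 (k + 1) (by omega) hk).2.ne')
  linarith

lemma share_lt_one (hd : IsPathInstance n d) (hx : IsPathFixedPoint n d x) {k : ℕ} (hk : k < n) :
    x (k + 1) < 1 := by
  refine (hx.share_mem_Icc hk).2.lt_of_ne fun h1 => ?_
  have hall : ∀ j, k ≤ j → j < n → x (j + 1) = 1 := by
    intro j hkj
    induction j, hkj using Nat.le_induction with
    | base => exact fun _ => h1
    | succ j _ ih =>
      intro hj
      rw [← nextShare_of_lt x hj]
      exact hx.nextShare_eq_one_of_share_eq_one hd (by omega) (ih (by omega))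
  have hn := hx.nextShare_eq_one_of_share_eq_one hd (k := n - 1) (by omega)
    (hall (n - 1) (by omega) (by omega))
  rw [Nat.sub_add_cancel (by omega), nextShare_self] at hn
  exact zero_ne_one hn

lemma value_lt_pathW (hd : IsPathInstance n d) (hx : IsPathFixedPoint n d x) {k : ℕ}
    (hk : k < n) : d (k + 1) < pathW d x (k + 1) := by
  have hpos : 0 < (1 - x (k + 1)) * pathW d x k :=
    mul_pos (by linarith [hx.share_lt_one hd hk]) (hx.pathW_pos hd hk.le)
  rw [hx.bargaining_eq_succ hk] at hpos
  nlinarith [(hx.nextShare_mem_Icc (k := k + 1) hk).2]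

lemma inv_share_eq (hd : IsPathInstance n d) (hx : IsPathFixedPoint n d x) {k : ℕ} (hk : k < n) :
    (x (k + 1))⁻¹ = 1 + (1 - nextShare n x (k + 1)) * (1 - d (k + 1) / pathW d x (k + 1)) := by
  have hx0 := (hx.share_pos hd hk).ne'
  have hw0 := (hx.pathW_pos hd hk.le).ne'
  have h := hx.bargaining_eq_succ hk
  rw [pathW_succ] at h ⊢
  field_simp
  linear_combination h

lemma pathW_eq_mul_inv (hd : IsPathInstance n d) (hx : IsPathFixedPoint n d x) {k : ℕ}
    (hk : k < n) : pathW d x k = pathW d x (k + 1) * (x (k + 1))⁻¹ := by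
  rw [pathW_succ, mul_inv_cancel_right₀ (hx.share_pos hd hk).ne']

end IsPathFixedPoint

section Comparison

variable {n : ℕ} {d e x y : ℕ → ℝ}

theorem inv_share_le_inv_share (hd : IsPathInstance n d) (he : IsPathInstance n e)
    (hx : IsPathFixedPoint n d x) (hy : IsPathFixedPoint n e y) {k : ℕ} (hk : k < n)
    (hde : d (k + 1) ≤ e (k + 1)) (hν : nextShare n x (k + 1) ≤ nextShare n y (k + 1))
    (hw : pathW e y (k + 1) ≤ pathW d x (k + 1)) : (y (k + 1))⁻¹ ≤ (x (k + 1))⁻¹ := by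
  rw [hx.inv_share_eq hd hk, hy.inv_share_eq he hk]
  gcongr 1 + (1 - ?_) * (1 - ?_)
  · rw [sub_nonneg, div_le_one (hy.pathW_pos he hk)]
    exact (hy.value_lt_pathW he hk).le
  · linarith [(hx.nextShare_mem_Icc (k := k + 1) hk).2]
  · exact div_le_div₀ (he.2 (k + 1) (by omega) hk).1 hde (hy.pathW_pos he hk) hw

theorem inv_share_lt_inv_share (hd : IsPathInstance n d) (he : IsPathInstance n e)
    (hx : IsPathFixedPoint n d x) (hy : IsPathFixedPoint n e y) {k : ℕ} (hk : k < n)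
    (hde : d (k + 1) ≤ e (k + 1)) (hν : nextShare n x (k + 1) ≤ nextShare n y (k + 1))
    (hw : pathW e y (k + 1) ≤ pathW d x (k + 1))
    (hstrict : d (k + 1) < e (k + 1) ∨ nextShare n x (k + 1) < nextShare n y (k + 1)) :
    (y (k + 1))⁻¹ < (x (k + 1))⁻¹ := by
  rw [hx.inv_share_eq hd hk, hy.inv_share_eq he hk, add_lt_add_iff_left]
  have hwy := hy.pathW_pos he (k := k + 1) hk
  have hey : 0 < 1 - e (k + 1) / pathW e y (k + 1) := by
    rw [sub_pos, div_lt_one hwy]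
    exact hy.value_lt_pathW he hk
  have hνx : 0 ≤ 1 - nextShare n x (k + 1) := by
    linarith [(hx.nextShare_mem_Icc (k := k + 1) hk).2]
  have hνy : 0 < 1 - nextShare n y (k + 1) := by
    rcases (k + 1).lt_or_ge n with h | h
    · rw [nextShare_of_lt y h]
      linarith [hy.share_lt_one he h]
    · rw [show k + 1 = n by omega, nextShare_self]
      norm_num
  have hdiv : d (k + 1) / pathW d x (k + 1) ≤ d (k + 1) / pathW e y (k + 1) :=
    div_le_div_of_nonneg_left (hd.2 (k + 1) (by omega) hk).1 hwy hw
  rcases hstrict with hlt | hlt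
  · calc (1 - nextShare n y (k + 1)) * (1 - e (k + 1) / pathW e y (k + 1))
        < (1 - nextShare n y (k + 1)) * (1 - d (k + 1) / pathW d x (k + 1)) :=
          mul_lt_mul_of_pos_left (by linarith [div_lt_div_of_pos_right hlt hwy]) hνy
      _ ≤ (1 - nextShare n x (k + 1)) * (1 - d (k + 1) / pathW d x (k + 1)) :=
          mul_le_mul_of_nonneg_right (by linarith)
            (by linarith [div_le_div_of_nonneg_right hde hwy.le])
  · calc (1 - nextShare n y (k + 1)) * (1 - e (k + 1) / pathW e y (k + 1))
        < (1 - nextShare n x (k + 1)) * (1 - e (k + 1) / pathW e y (k + 1)) :=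
          mul_lt_mul_of_pos_right (by linarith) hey
      _ ≤ (1 - nextShare n x (k + 1)) * (1 - d (k + 1) / pathW d x (k + 1)) :=
          mul_le_mul_of_nonneg_left (by linarith [div_le_div_of_nonneg_right hde hwy.le]) hνx

theorem backward_step_le (hd : IsPathInstance n d) (he : IsPathInstance n e)
    (hx : IsPathFixedPoint n d x) (hy : IsPathFixedPoint n e y) {k : ℕ} (hk : k < n)
    (hde : d (k + 1) ≤ e (k + 1)) (hν : nextShare n x (k + 1) ≤ nextShare n y (k + 1))
    (hw : pathW e y (k + 1) ≤ pathW d x (k + 1)) :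
    nextShare n x k ≤ nextShare n y k ∧ pathW e y k ≤ pathW d x k := by
  have hinv := inv_share_le_inv_share hd he hx hy hk hde hν hw
  constructor
  · rw [nextShare_of_lt x hk, nextShare_of_lt y hk]
    exact (inv_le_inv₀ (hy.share_pos he hk) (hx.share_pos hd hk)).1 hinv
  · rw [hx.pathW_eq_mul_inv hd hk, hy.pathW_eq_mul_inv he hk]
    exact mul_le_mul hw hinv (inv_pos.2 (hy.share_pos he hk)).le (hx.pathW_pos hd hk).le

theorem backward_step_lt (hd : IsPathInstance n d) (he : IsPathInstance n e)
    (hx : IsPathFixedPoint n d x) (hy : IsPathFixedPoint n e y) {k : ℕ} (hk : k < n)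
    (hde : d (k + 1) ≤ e (k + 1)) (hν : nextShare n x (k + 1) ≤ nextShare n y (k + 1))
    (hw : pathW e y (k + 1) ≤ pathW d x (k + 1))
    (hstrict : pathW e y (k + 1) < pathW d x (k + 1) ∨ d (k + 1) < e (k + 1)) :
    nextShare n x k ≤ nextShare n y k ∧ pathW e y k < pathW d x k := by
  refine ⟨(backward_step_le hd he hx hy hk hde hν hw).1, ?_⟩
  have hx0 := hx.pathW_pos hd (k := k + 1) hk
  have hy0 := inv_pos.2 (hy.share_pos he hk)
  rw [hx.pathW_eq_mul_inv hd hk, hy.pathW_eq_mul_inv he hk]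
  rcases hstrict with hlt | hlt
  · exact mul_lt_mul hlt (inv_share_le_inv_share hd he hx hy hk hde hν hw) hy0 hx0.le
  · exact mul_lt_mul' hw (inv_share_lt_inv_share hd he hx hy hk hde hν hw (Or.inl hlt)) hy0.le hx0

theorem backward_le (hd : IsPathInstance n d) (he : IsPathInstance n e)
    (hx : IsPathFixedPoint n d x) (hy : IsPathFixedPoint n e y) {k m : ℕ} (hkm : k ≤ m)
    (hm : m ≤ n) (hde : ∀ j, k < j → j ≤ m → d j ≤ e j)
    (hν : nextShare n x m ≤ nextShare n y m) (hw : pathW e y m ≤ pathW d x m) :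
    nextShare n x k ≤ nextShare n y k ∧ pathW e y k ≤ pathW d x k := by
  induction m, hkm using Nat.le_induction with
  | base => exact ⟨hν, hw⟩
  | succ m hkm ih =>
    obtain ⟨hν', hw'⟩ := backward_step_le hd he hx hy hm (hde (m + 1) (by omega) le_rfl) hν hw
    exact ih (by omega) (fun j hkj hjm => hde j hkj (by omega)) hν' hw'

theorem backward_lt (hd : IsPathInstance n d) (he : IsPathInstance n e)
    (hx : IsPathFixedPoint n d x) (hy : IsPathFixedPoint n e y) {k m : ℕ} (hkm : k ≤ m)
    (hm : m ≤ n) (hde : ∀ j, k < j → j ≤ m → d j ≤ e j)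
    (hν : nextShare n x m ≤ nextShare n y m) (hw : pathW e y m < pathW d x m) :
    nextShare n x k ≤ nextShare n y k ∧ pathW e y k < pathW d x k := by
  induction m, hkm using Nat.le_induction with
  | base => exact ⟨hν, hw⟩
  | succ m hkm ih =>
    obtain ⟨hν', hw'⟩ :=
      backward_step_lt hd he hx hy hm (hde (m + 1) (by omega) le_rfl) hν hw.le (Or.inl hw)
    exact ih (by omega) (fun j hkj hjm => hde j hkj (by omega)) hν' hw'

theorem pathW_last_lt (hd : IsPathInstance n d) (he : IsPathInstance n e)
    (hx : IsPathFixedPoint n d x) (hy : IsPathFixedPoint n e y) (h0 : e 0 = d 0)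
    (hde : ∀ j, 1 ≤ j → j ≤ n → d j ≤ e j) {i : ℕ} (hi : 1 ≤ i) (hin : i ≤ n)
    (hdi : d i < e i) : pathW d x n < pathW e y n := by
  by_contra! hle
  obtain ⟨k, rfl⟩ : ∃ k, i = k + 1 := ⟨i - 1, by omega⟩
  obtain ⟨hν, hw⟩ := backward_le hd he hx hy hin le_rfl
    (fun j hj hjn => hde j (by omega) hjn) (by simp) hle
  obtain ⟨hν', hw'⟩ := backward_step_lt hd he hx hy hin hdi.le hν hw (Or.inr hdi)
  have := (backward_lt hd he hx hy (Nat.zero_le k) (by omega)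
    (fun j hj hjk => hde j hj (by omega)) hν' hw').2
  simp [h0] at this

theorem share_lt_of_pathW_lt (hd : IsPathInstance n d) (he : IsPathInstance n e)
    (hx : IsPathFixedPoint n d x) (hy : IsPathFixedPoint n e y) (h0 : e 0 = d 0)
    {i : ℕ} (hin : i ≤ n) (hde : ∀ j, 1 ≤ j → j < i → d j = e j) {k : ℕ} (hk : k < i)
    (hw : pathW d x (k + 1) < pathW e y (k + 1)) : x (k + 1) < y (k + 1) := by
  induction k with
  | zero =>
    simp only [zero_add, pathW_succ, pathW_zero, h0] at hw
    exact lt_of_mul_lt_mul_left hw hd.1.le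
  | succ k ih =>
    by_contra! hyx
    rcases lt_or_ge (pathW d x (k + 1)) (pathW e y (k + 1)) with hlt | hle
    · have hν : nextShare n y (k + 1) ≤ nextShare n x (k + 1) := by
        rwa [nextShare_of_lt y (by omega), nextShare_of_lt x (by omega)]
      have := (backward_step_le he hd hy hx (k := k) (by omega) (hde (k + 1) (by omega) hk).ge hν
        hlt.le).1
      rw [nextShare_of_lt x (by omega), nextShare_of_lt y (by omega)] at this
      exact (ih (by omega) hlt).not_ge this
    · rw [pathW_succ d, pathW_succ e] at hw
      exact hw.not_ge (mul_le_mul hle hyx (hy.share_pos he (by omega)).le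
        (hx.pathW_pos hd (by omega)).le)

theorem share_lt_of_next_lt (hd : IsPathInstance n d) (he : IsPathInstance n e)
    (hx : IsPathFixedPoint n d x) (hy : IsPathFixedPoint n e y) (h0 : e 0 = d 0)
    {i : ℕ} (hin : i ≤ n) (hde : ∀ j, 1 ≤ j → j < i → d j = e j) {k : ℕ} (hk : k + 1 < i)
    (hnext : x (k + 2) < y (k + 2)) : x (k + 1) < y (k + 1) := by
  rcases lt_or_ge (pathW d x (k + 1)) (pathW e y (k + 1)) with hlt | hle
  · exact share_lt_of_pathW_lt hd he hx hy h0 hin hde (by omega) hlt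
  · have hν : nextShare n x (k + 1) < nextShare n y (k + 1) := by
      rwa [nextShare_of_lt x (by omega), nextShare_of_lt y (by omega)]
    have := inv_share_lt_inv_share hd he hx hy (k := k) (by omega) (hde (k + 1) (by omega) hk).le
      hν.le hle (Or.inr hν)
    exact (inv_lt_inv₀ (hy.share_pos he (by omega)) (hx.share_pos hd (by omega))).1 this

theorem share_lt_share (hd : IsPathInstance n d) (he : IsPathInstance n e)
    (hx : IsPathFixedPoint n d x) (hy : IsPathFixedPoint n e y) (h0 : e 0 = d 0)
    {i : ℕ} (hin : i ≤ n) (hde : ∀ j, 1 ≤ j → j < i → d j = e j)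
    (hw : pathW d x i < pathW e y i) : ∀ j, 1 ≤ j → j ≤ i → x j < y j := by
  intro j hj hji
  obtain ⟨m, rfl⟩ : ∃ m, i = m + 1 := ⟨i - 1, by omega⟩
  obtain ⟨k, rfl⟩ : ∃ k, j = k + 1 := ⟨j - 1, by omega⟩
  refine Nat.decreasingInduction (motive := fun k _ => x (k + 1) < y (k + 1))
    (fun k hkm ih => share_lt_of_next_lt hd he hx hy h0 hin hde (by omega) ih)
    (share_lt_of_pathW_lt hd he hx hy h0 hin hde (by omega) hw) (by omega : k ≤ m)

end Comparison

theorem shares_below_increase_general (n : ℕ) (d : ℕ → ℝ)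
    (hd0 : 0 < d 0) (hd : ∀ j, 1 ≤ j → j ≤ n → 0 ≤ d j ∧ d j < d 0)
    (i : ℕ) (hi1 : 1 ≤ i) (hin : i ≤ n)
    (d' : ℝ) (hdi : d i < d') (hd'0 : d' < d 0)
    (x x' : ℕ → ℝ)
    (hx : IsPathFixedPoint n d x)
    (hx' : IsPathFixedPoint n (Function.update d i d') x') :
    (∀ j, 1 ≤ j → j ≤ i → x j < x' j) ∧
      pathW d x i < pathW (Function.update d i d') x' i := by
  set e := Function.update d i d'
  have he0 : e 0 = d 0 := Function.update_of_ne (by omega) _ _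
  have hei : e i = d' := Function.update_self i d' d
  have hed : ∀ j, j ≠ i → e j = d j := fun j hj => Function.update_of_ne hj _ _
  have hde : ∀ j, d j ≤ e j := fun j => by
    rcases eq_or_ne j i with rfl | hj
    · exact hei ▸ hdi.le
    · exact (hed j hj).ge
  have hd_inst : IsPathInstance n d := ⟨hd0, hd⟩
  have he_inst : IsPathInstance n e := ⟨he0 ▸ hd0, fun j hj hjn =>
    ⟨(hd j hj hjn).1.trans (hde j), by
      rcases eq_or_ne j i with rfl | hji
      · rwa [hei, he0]
      · rw [hed j hji, he0]; exact (hd j hj hjn).2⟩⟩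
  have hlast := pathW_last_lt hd_inst he_inst hx hx' he0 (fun j _ _ => hde j) hi1 hin (hei ▸ hdi)
  have hwi := (backward_lt he_inst hd_inst hx' hx hin le_rfl
    (fun j hij _ => (hed j (by omega)).le) (by simp) hlast).2
  exact ⟨share_lt_share hd_inst he_inst hx hx' he0 hin
    (fun j _ hji => (hed j (by omega)).symm) hwi, hwi⟩

/-- Increasing `d i` (keeping it below `d 0`) strictly increases every fixed-point
share `x j` for `j ≤ i`, and hence the value reaching node `i`. -/
theorem shares_below_increase (n : ℕ) (hn : 1 ≤ n) (d : ℕ → ℝ)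
    (hd0 : 0 < d 0) (hd : ∀ j, 1 ≤ j → j ≤ n → 0 ≤ d j ∧ d j < d 0)
    (i : ℕ) (hi1 : 1 ≤ i) (hin : i ≤ n)
    (d' : ℝ) (hdi : d i < d') (hd'0 : d' < d 0)
    (x x' : ℕ → ℝ)
    (hx : IsPathFixedPoint n d x)
    (hx' : IsPathFixedPoint n (Function.update d i d') x') :
    (∀ j, 1 ≤ j → j ≤ i → x j < x' j) ∧
      pathW d x i < pathW (Function.update d i d') x' i :=
  shares_below_increase_general n d hd0 hd i hi1 hin d' hdi hd'0 x x' hx hx'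
end

section
/- Efficiency of fixed points: let v* = max_l v_l, let l* be a leaf with v_{l*} = v*, and let l be any leaf with v_l < v*. Then in any fixed point of the tree bargaining equations, v*·∏_{t ∈ P(l*)} x_t > v_l·∏_{t ∈ P(l)} x_t, where P(l) denotes the set of non-root nodes on the unique path from leaf l to the root r. In particular, the highest offer reaching the seller comes from a maximum-value leaf. -/
/-- A finite rooted tree, given by a parent function: the root is its own
parent, and every node reaches the root by iterating `parent`. -/
structure BTree where
  V : Type
  [instFintype : Fintype V]
  [instDecEq : DecidableEq V]
  root : V
  parent : V → V
  parent_root : parent root = root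
  reaches_root : ∀ t : V, ∃ k : ℕ, parent^[k] t = root

attribute [instance] BTree.instFintype BTree.instDecEq

/-- The children of a node `s`: the non-root nodes whose parent is `s`. -/
def BTree.children (T : BTree) (s : T.V) : Finset T.V :=
  Finset.univ.filter fun t => t ≠ T.root ∧ T.parent t = s

/-- A leaf is a node with no children. -/
def BTree.IsLeaf (T : BTree) (l : T.V) : Prop :=
  T.children l = ∅

/-- Maximum of `f` over a finite set `F`, with value `0` when `F` is empty. -/
noncomputable def fmax {α : Type*} (F : Finset α) (f : α → ℝ) : ℝ :=
  sSup (insert 0 (f '' (F : Set α)))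

/-- `w` is the value function determined by leaf values `v` and shares `x`:
`w l = v l` at each leaf `l`, and `w s = max_{t ∈ children s} x t · w t` at
each internal node `s`. -/
def IsValueFn (T : BTree) (v x w : T.V → ℝ) : Prop :=
  (∀ l, T.IsLeaf l → w l = v l) ∧
  ∀ s, ¬ T.IsLeaf s → w s = fmax (T.children s) fun t => x t * w t

/-- `wexcl T x w s t`: the maximum value reaching `s` from its children other
than `t` (`0` when `t` is the only child). -/
noncomputable def wexcl (T : BTree) (x w : T.V → ℝ) (s t : T.V) : ℝ :=
  fmax ((T.children s).erase t) fun t' => x t' * w t'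

/-- A fixed point of the tree bargaining equations: `x` is a share vector
(`x root = 0`, `x t ∈ [0,1]` off the root), `w` is the induced value function,
and for every non-root `t` with parent `s`:
`(1 − x t)·w t = (1 − x s)·(max(w_{s∖t}, x t · w t) − w_{s∖t})`. -/
def IsTreeFixedPoint (T : BTree) (v x w : T.V → ℝ) : Prop :=
  IsValueFn T v x w ∧
  x T.root = 0 ∧
  (∀ t, t ≠ T.root → 0 ≤ x t ∧ x t ≤ 1) ∧
  ∀ t, t ≠ T.root →
    (1 - x t) * w t =
      (1 - x (T.parent t)) *
        (max (wexcl T x w (T.parent t) t) (x t * w t) - wexcl T x w (T.parent t) t)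

open Classical in
/-- `pathProd T x l`: the product of the shares over all non-root nodes on the
unique path from `l` to the root. -/
noncomputable def pathProd (T : BTree) (x : T.V → ℝ) (l : T.V) : ℝ :=
  ∏ t ∈ Finset.univ.filter (fun t => t ≠ T.root ∧ ∃ k : ℕ, T.parent^[k] l = t), x t

/-!
Call `v l · ∏ x_t`, over the path from a leaf `l` up to (but excluding) an ancestor `s`,
the offer of `l` at `s`. Going up the tree one shows that at every node `s` the offers of the
best leaves below `s` equal `w s`, and all other offers are strictly smaller.
The fixed-point equation yields the two facts that drive this induction: a child with share
`< 1` strictly outbids its siblings, and shares `< 1` propagate towards the root. So below a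
child with share `1` all shares are `1`, and it passes the full value of its best leaf upwards.
Hence a child containing a best leaf below `s` cannot lose at `s` (its offer would exceed `w s`),
and a child without one cannot tie with it (the tying best child would then have share `1`).
-/

section Fmax

variable {α : Type*} {F G : Finset α} {f : α → ℝ} {a : α}

lemma bddAbove_insert_zero_image : BddAbove (insert 0 (f '' F)) :=
  ((F.finite_toSet.image f).insert 0).bddAbove

lemma fmax_nonneg : 0 ≤ fmax F f :=
  le_csSup bddAbove_insert_zero_image (Set.mem_insert _ _)

lemma le_fmax (h : a ∈ F) : f a ≤ fmax F f :=
  le_csSup bddAbove_insert_zero_image (Set.mem_insert_of_mem _ (Set.mem_image_of_mem f h))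

lemma fmax_le {b : ℝ} (hb : 0 ≤ b) (h : ∀ a ∈ F, f a ≤ b) : fmax F f ≤ b := by
  refine csSup_le (Set.insert_nonempty _ _) ?_
  rintro _ (rfl | ⟨a, ha, rfl⟩)
  exacts [hb, h a ha]

lemma fmax_mono (h : F ⊆ G) : fmax F f ≤ fmax G f :=
  fmax_le fmax_nonneg fun _ ha => le_fmax (h ha)

lemma exists_eq_fmax (h : ∃ a ∈ F, 0 ≤ f a) : ∃ a ∈ F, f a = fmax F f := by
  have hmem : fmax F f ∈ insert 0 (f '' F) :=
    (Set.insert_nonempty _ _).csSup_mem ((F.finite_toSet.image f).insert 0)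
  rcases hmem with h0 | ⟨a, ha, hfa⟩
  · obtain ⟨a, ha, hfa⟩ := h
    exact ⟨a, ha, le_antisymm (le_fmax ha) (h0 ▸ hfa)⟩
  · exact ⟨a, ha, hfa⟩

lemma fmax_eq_max_fmax_erase [DecidableEq α] (h : a ∈ F) :
    fmax F f = max (f a) (fmax (F.erase a) f) := by
  refine le_antisymm (fmax_le (fmax_nonneg.trans (le_max_right _ _)) fun b hb => ?_)
    (max_le (le_fmax h) (fmax_mono (F.erase_subset a)))
  rcases eq_or_ne b a with rfl | hne
  · exact le_max_left _ _
  · exact (le_fmax (Finset.mem_erase.2 ⟨hne, hb⟩)).trans (le_max_right _ _)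

end Fmax

namespace BTree

variable {T : BTree} {s t c l : T.V}

lemma eq_root_of_iterate_eq_self {p : ℕ} (hp : p ≠ 0) (h : T.parent^[p] t = t) :
    t = T.root := by
  obtain ⟨d, hd⟩ := T.reaches_root t
  have hper : T.parent^[d * p] t = t := Function.IsPeriodicPt.const_mul h d
  calc t = T.parent^[d * p - d + d] t := by
        rw [Nat.sub_add_cancel (Nat.le_mul_of_pos_right d (Nat.pos_of_ne_zero hp)), hper]
    _ = T.root := by rw [Function.iterate_add_apply, hd, Function.iterate_fixed T.parent_root]

/-- `t ≤ s` when `s` is `t` or one of its ancestors. -/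
instance : PartialOrder T.V where
  le t s := ∃ k, T.parent^[k] t = s
  le_refl t := ⟨0, rfl⟩
  le_trans := by
    rintro a b c ⟨j, rfl⟩ ⟨k, rfl⟩
    exact ⟨k + j, Function.iterate_add_apply _ _ _ _⟩
  le_antisymm := by
    rintro a b ⟨j, rfl⟩ ⟨k, hk⟩
    rw [← Function.iterate_add_apply] at hk
    rcases Nat.eq_zero_or_pos (k + j) with h | h
    · rw [Nat.eq_zero_of_add_eq_zero_left h, Function.iterate_zero_apply]
    · rw [eq_root_of_iterate_eq_self h.ne' hk, Function.iterate_fixed T.parent_root]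

lemma le_root (t : T.V) : t ≤ T.root :=
  T.reaches_root t

lemma le_parent (t : T.V) : t ≤ T.parent t :=
  ⟨1, rfl⟩

lemma parent_le_of_lt (h : t < s) : T.parent t ≤ s := by
  obtain ⟨⟨k, hk⟩, hne⟩ := lt_iff_le_and_ne.1 h
  cases k with
  | zero => exact absurd hk hne
  | succ k => exact ⟨k, by rwa [← Function.iterate_succ_apply]⟩

lemma covBy_parent (ht : t ≠ T.root) : t ⋖ T.parent t :=
  ⟨(le_parent t).lt_of_ne fun h => ht (eq_root_of_iterate_eq_self one_ne_zero h.symm),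
    fun _ htu hup => (parent_le_of_lt htu).not_gt hup⟩

lemma le_total_of_le (hs : l ≤ s) (ht : l ≤ t) : s ≤ t ∨ t ≤ s := by
  obtain ⟨i, rfl⟩ := hs
  obtain ⟨j, rfl⟩ := ht
  rcases le_total i j with h | h
  · exact .inl ⟨j - i, by rw [← Function.iterate_add_apply, Nat.sub_add_cancel h]⟩
  · exact .inr ⟨i - j, by rw [← Function.iterate_add_apply, Nat.sub_add_cancel h]⟩

lemma mem_children : c ∈ T.children s ↔ c ≠ T.root ∧ T.parent c = s := by
  simp [children]

lemma covBy_of_mem_children (hc : c ∈ T.children s) : c ⋖ s := by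
  obtain ⟨hcr, rfl⟩ := mem_children.1 hc
  exact covBy_parent hcr

lemma not_isLeaf_of_mem_children (hc : c ∈ T.children s) : ¬ T.IsLeaf s :=
  Finset.ne_empty_of_mem hc

lemma exists_mem_children_le_of_lt (h : t < s) : ∃ c ∈ T.children s, t ≤ c := by
  obtain ⟨⟨k, hk⟩, hne⟩ := lt_iff_le_and_ne.1 h
  clear h
  induction k generalizing t with
  | zero => exact absurd hk hne
  | succ k ih =>
    rw [Function.iterate_succ_apply] at hk
    by_cases hp : T.parent t = s
    · refine ⟨t, mem_children.2 ⟨?_, hp⟩, le_rfl⟩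
      rintro rfl
      exact hne (T.parent_root ▸ hp)
    · obtain ⟨c, hc, hpc⟩ := ih hp hk
      exact ⟨c, hc, (le_parent t).trans hpc⟩

lemma IsLeaf.eq_of_le (hl : T.IsLeaf l) (h : t ≤ l) : t = l := by
  by_contra hne
  obtain ⟨c, hc, -⟩ := exists_mem_children_le_of_lt (h.lt_of_ne hne)
  exact not_isLeaf_of_mem_children hc hl

lemma exists_isLeaf_le (s : T.V) : ∃ l, T.IsLeaf l ∧ l ≤ s := by
  obtain ⟨l, hls, hmin⟩ := (Set.toFinite Set.univ).exists_le_minimal (Set.mem_univ s)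
  refine ⟨l, Finset.eq_empty_iff_forall_notMem.2 fun c hc => ?_, hls⟩
  have hcl := (covBy_of_mem_children hc).lt
  exact hcl.not_ge (hmin.2 (Set.mem_univ c) hcl.le)

noncomputable instance : LocallyFiniteOrder T.V := by
  classical exact Fintype.toLocallyFiniteOrder

lemma Ico_eq_insert_Ico (hc : c ∈ T.children s) (hl : l ≤ c) :
    Finset.Ico l s = insert c (Finset.Ico l c) := by
  have hcs := covBy_of_mem_children hc
  rw [Finset.Ico_insert_right hl]
  ext t
  simp only [Finset.mem_Ico, Finset.mem_Icc, and_congr_right_iff]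
  refine fun hlt => ⟨fun hts => ?_, fun htc => htc.trans_lt hcs.lt⟩
  rcases le_total_of_le hl hlt with hct | htc
  · rcases hct.eq_or_lt with rfl | hct
    exacts [le_rfl, absurd hts (hcs.2 hct)]
  · exact htc

open Classical in
noncomputable def leavesBelow (T : BTree) (s : T.V) : Finset T.V :=
  Finset.univ.filter fun l => T.IsLeaf l ∧ l ≤ s

lemma mem_leavesBelow : l ∈ T.leavesBelow s ↔ T.IsLeaf l ∧ l ≤ s := by
  simp [leavesBelow]

noncomputable def subtreeMax (T : BTree) (v : T.V → ℝ) (s : T.V) : ℝ :=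
  fmax (T.leavesBelow s) v

/-- `Finset.Ico l s` is the path from `l` up to its ancestor `s`, without `s`. -/
noncomputable def offer (T : BTree) (v x : T.V → ℝ) (l s : T.V) : ℝ :=
  v l * ∏ t ∈ Finset.Ico l s, x t

def IsEfficientAt (T : BTree) (v x w : T.V → ℝ) (s : T.V) : Prop :=
  ∀ l ∈ T.leavesBelow s, (v l = T.subtreeMax v s → T.offer v x l s = w s) ∧
    (v l < T.subtreeMax v s → T.offer v x l s < w s)

variable {v x : T.V → ℝ}

lemma le_subtreeMax (hl : l ∈ T.leavesBelow s) : v l ≤ T.subtreeMax v s :=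
  le_fmax hl

lemma subtreeMax_mono (h : t ≤ s) : T.subtreeMax v t ≤ T.subtreeMax v s :=
  fmax_mono fun _ hl => by
    obtain ⟨hleaf, hlt⟩ := mem_leavesBelow.1 hl
    exact mem_leavesBelow.2 ⟨hleaf, hlt.trans h⟩

lemma exists_eq_subtreeMax (hv : ∀ l, T.IsLeaf l → 0 ≤ v l) (s : T.V) :
    ∃ l ∈ T.leavesBelow s, v l = T.subtreeMax v s := by
  obtain ⟨l, hl, hls⟩ := exists_isLeaf_le s
  exact exists_eq_fmax ⟨l, mem_leavesBelow.2 ⟨hl, hls⟩, hv l hl⟩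

lemma exists_mem_children_subtreeMax_eq (hv : ∀ l, T.IsLeaf l → 0 ≤ v l)
    (hs : ¬ T.IsLeaf s) : ∃ c ∈ T.children s, T.subtreeMax v c = T.subtreeMax v s := by
  obtain ⟨l, hl, hvl⟩ := exists_eq_subtreeMax hv s
  obtain ⟨hleaf, hls⟩ := mem_leavesBelow.1 hl
  obtain ⟨c, hc, hlc⟩ :=
    exists_mem_children_le_of_lt (hls.lt_of_ne fun h => hs (h ▸ hleaf))
  refine ⟨c, hc, (subtreeMax_mono (covBy_of_mem_children hc).le).antisymm ?_⟩
  exact hvl ▸ le_subtreeMax (mem_leavesBelow.2 ⟨hleaf, hlc⟩)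

lemma offer_self (l : T.V) : T.offer v x l l = v l := by
  simp [offer]

lemma offer_eq_mul_offer (hc : c ∈ T.children s) (hl : l ≤ c) :
    T.offer v x l s = x c * T.offer v x l c := by
  rw [offer, offer, Ico_eq_insert_Ico hc hl,
    Finset.prod_insert fun h => (Finset.mem_Ico.1 h).2.false]
  ring

lemma mul_pathProd_eq_offer_root (l : T.V) : v l * pathProd T x l = T.offer v x l T.root := by
  rw [offer, pathProd]
  congr 1
  refine Finset.prod_congr (Finset.ext fun t => ?_) fun _ _ => rfl
  simp only [Finset.mem_filter, Finset.mem_univ, true_and, Finset.mem_Ico,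
    (le_root t).lt_iff_ne]
  exact ⟨fun ⟨h, k, hk⟩ => ⟨⟨k, hk⟩, h⟩, fun ⟨hk, h⟩ => ⟨h, hk⟩⟩

end BTree

open BTree

namespace IsTreeFixedPoint

variable {T : BTree} {v x w : T.V → ℝ} {s t u c l : T.V}

lemma share_nonneg (hfp : IsTreeFixedPoint T v x w) (t : T.V) : 0 ≤ x t := by
  by_cases ht : t = T.root
  · rw [ht, hfp.2.1]
  · exact (hfp.2.2.1 t ht).1

lemma share_le_one (hfp : IsTreeFixedPoint T v x w) (t : T.V) : x t ≤ 1 := by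
  by_cases ht : t = T.root
  · rw [ht, hfp.2.1]
    exact zero_le_one
  · exact (hfp.2.2.1 t ht).2

lemma mul_value_le (hfp : IsTreeFixedPoint T v x w) (hc : c ∈ T.children s) :
    x c * w c ≤ w s := by
  rw [hfp.1.2 s (not_isLeaf_of_mem_children hc)]
  exact le_fmax (f := fun t => x t * w t) hc

lemma value_eq_max_wexcl (hfp : IsTreeFixedPoint T v x w) (hc : c ∈ T.children s) :
    w s = max (x c * w c) (wexcl T x w s c) := by
  rw [hfp.1.2 s (not_isLeaf_of_mem_children hc), fmax_eq_max_fmax_erase hc, wexcl]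

lemma value_eq_zero_of_share_eq_zero (hfp : IsTreeFixedPoint T v x w) (ht : t ≠ T.root)
    (h : x t = 0) : w t = 0 := by
  have heq := hfp.2.2.2 t ht
  have he : 0 ≤ wexcl T x w (T.parent t) t := fmax_nonneg
  rwa [h, zero_mul, max_eq_left he, sub_self, mul_zero, sub_zero, one_mul] at heq

lemma value_pos (hfp : IsTreeFixedPoint T v x w) (hv : ∀ l, T.IsLeaf l → 0 < v l) (t : T.V) :
    0 < w t := by
  induction t using WellFoundedLT.induction with
  | ind s ih =>
    by_cases hs : T.IsLeaf s
    · rw [hfp.1.1 s hs]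
      exact hv s hs
    obtain ⟨c, hc⟩ := Finset.nonempty_iff_ne_empty.2 hs
    have hwc := ih c (covBy_of_mem_children hc).lt
    have hxc : 0 < x c := (hfp.share_nonneg c).lt_of_ne fun h =>
      hwc.ne' (hfp.value_eq_zero_of_share_eq_zero (mem_children.1 hc).1 h.symm)
    exact (mul_pos hxc hwc).trans_le (hfp.mul_value_le hc)

lemma share_pos (hfp : IsTreeFixedPoint T v x w) (hv : ∀ l, T.IsLeaf l → 0 < v l)
    (ht : t ≠ T.root) : 0 < x t :=
  (hfp.share_nonneg t).lt_of_ne fun h =>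
    (hfp.value_pos hv t).ne' (hfp.value_eq_zero_of_share_eq_zero ht h.symm)

/-- A share below `1` makes the left side of the fixed-point equation positive, so both factors
on the right are positive. -/
lemma share_parent_lt_one_and_wexcl_lt (hfp : IsTreeFixedPoint T v x w)
    (hv : ∀ l, T.IsLeaf l → 0 < v l) (ht : t ≠ T.root) (h : x t < 1) :
    x (T.parent t) < 1 ∧ wexcl T x w (T.parent t) t < x t * w t := by
  have hpos := mul_pos (sub_pos.2 h) (hfp.value_pos hv t)
  rw [hfp.2.2.2 t ht] at hpos
  obtain ⟨h1, h2⟩ := (pos_and_pos_or_neg_and_neg_of_mul_pos hpos).resolve_right fun hneg =>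
    (sub_nonneg.2 (hfp.share_le_one _)).not_gt hneg.1
  exact ⟨sub_pos.1 h1, (lt_max_iff.1 (sub_pos.1 h2)).resolve_left (lt_irrefl _)⟩

lemma share_parent_lt_one (hfp : IsTreeFixedPoint T v x w) (hv : ∀ l, T.IsLeaf l → 0 < v l)
    (h : x t < 1) : x (T.parent t) < 1 := by
  by_cases ht : t = T.root
  · rwa [ht, T.parent_root, ← ht]
  · exact (hfp.share_parent_lt_one_and_wexcl_lt hv ht h).1

lemma share_lt_one_of_le (hfp : IsTreeFixedPoint T v x w) (hv : ∀ l, T.IsLeaf l → 0 < v l)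
    (h : x t < 1) (htu : t ≤ u) : x u < 1 := by
  obtain ⟨k, rfl⟩ := htu
  induction k generalizing t with
  | zero => exact h
  | succ k ih =>
    rw [Function.iterate_succ_apply]
    exact ih (hfp.share_parent_lt_one hv h)

lemma share_eq_one_of_le (hfp : IsTreeFixedPoint T v x w) (hv : ∀ l, T.IsLeaf l → 0 < v l)
    (h : x u = 1) (htu : t ≤ u) : x t = 1 :=
  (hfp.share_le_one t).eq_or_lt.resolve_right fun hlt => (hfp.share_lt_one_of_le hv hlt htu).ne h

lemma wexcl_lt_of_share_lt_one (hfp : IsTreeFixedPoint T v x w)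
    (hv : ∀ l, T.IsLeaf l → 0 < v l) (hc : c ∈ T.children s) (h : x c < 1) :
    wexcl T x w s c < x c * w c := by
  obtain ⟨hcr, rfl⟩ := mem_children.1 hc
  exact (hfp.share_parent_lt_one_and_wexcl_lt hv hcr h).2

lemma mul_value_eq_of_share_lt_one (hfp : IsTreeFixedPoint T v x w)
    (hv : ∀ l, T.IsLeaf l → 0 < v l) (hc : c ∈ T.children s) (h : x c < 1) :
    x c * w c = w s := by
  rw [hfp.value_eq_max_wexcl hc, max_eq_left (hfp.wexcl_lt_of_share_lt_one hv hc h).le]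

lemma offer_le (hfp : IsTreeFixedPoint T v x w) (hv : ∀ l, T.IsLeaf l → 0 < v l)
    (hl : T.IsLeaf l) (s : T.V) : T.offer v x l s ≤ v l :=
  mul_le_of_le_one_right (hv l hl).le
    (Finset.prod_le_one (fun t _ => hfp.share_nonneg t) fun t _ => hfp.share_le_one t)

lemma offer_eq_of_share_eq_one (hfp : IsTreeFixedPoint T v x w)
    (hv : ∀ l, T.IsLeaf l → 0 < v l) (h : x c = 1) : T.offer v x l c = v l := by
  rw [offer, Finset.prod_eq_one fun t ht =>
    hfp.share_eq_one_of_le hv h (Finset.mem_Ico.1 ht).2.le, mul_one]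

lemma value_le_subtreeMax (hfp : IsTreeFixedPoint T v x w) (hv : ∀ l, T.IsLeaf l → 0 < v l)
    (h : T.IsEfficientAt v x w s) : w s ≤ T.subtreeMax v s := by
  obtain ⟨l, hl, hvl⟩ := exists_eq_subtreeMax (fun l hl => (hv l hl).le) s
  calc w s = T.offer v x l s := ((h l hl).1 hvl).symm
    _ ≤ v l := hfp.offer_le hv (mem_leavesBelow.1 hl).1 s
    _ = T.subtreeMax v s := hvl

lemma value_eq_subtreeMax_of_share_eq_one (hfp : IsTreeFixedPoint T v x w)
    (hv : ∀ l, T.IsLeaf l → 0 < v l) (h : T.IsEfficientAt v x w c) (hx : x c = 1) :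
    w c = T.subtreeMax v c := by
  obtain ⟨l, hl, hvl⟩ := exists_eq_subtreeMax (fun l hl => (hv l hl).le) c
  rw [← (h l hl).1 hvl, hfp.offer_eq_of_share_eq_one hv hx, hvl]

lemma isEfficientAt_of_isLeaf (hfp : IsTreeFixedPoint T v x w)
    (hv : ∀ l, T.IsLeaf l → 0 < v l) (hs : T.IsLeaf s) : T.IsEfficientAt v x w s := by
  intro l hl
  obtain rfl := hs.eq_of_le (mem_leavesBelow.1 hl).2
  have hM : T.subtreeMax v l ≤ v l := fmax_le (hv l hs).le fun l' hl' =>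
    (congrArg v (hs.eq_of_le (mem_leavesBelow.1 hl').2)).le
  exact ⟨fun _ => by rw [offer_self, hfp.1.1 l hs], fun hlt => absurd hM hlt.not_ge⟩

lemma value_le_subtreeMax_of_children (hfp : IsTreeFixedPoint T v x w)
    (hv : ∀ l, T.IsLeaf l → 0 < v l) (hch : ∀ c ∈ T.children s, T.IsEfficientAt v x w c)
    (hs : ¬ T.IsLeaf s) : w s ≤ T.subtreeMax v s := by
  rw [hfp.1.2 s hs]
  refine fmax_le fmax_nonneg fun c hc => ?_
  calc x c * w c ≤ w c := mul_le_of_le_one_left (hfp.value_pos hv c).le (hfp.share_le_one c)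
    _ ≤ T.subtreeMax v c := hfp.value_le_subtreeMax hv (hch c hc)
    _ ≤ T.subtreeMax v s := subtreeMax_mono (covBy_of_mem_children hc).le

/-- Otherwise `c` loses at `s`, so its share is `1` and it passes up the full value
`T.subtreeMax v s ≥ w s`. -/
lemma mul_value_eq_of_subtreeMax_eq (hfp : IsTreeFixedPoint T v x w)
    (hv : ∀ l, T.IsLeaf l → 0 < v l) (hch : ∀ c ∈ T.children s, T.IsEfficientAt v x w c)
    (hc : c ∈ T.children s) (hM : T.subtreeMax v c = T.subtreeMax v s) :
    x c * w c = w s := by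
  refine (hfp.mul_value_le hc).eq_or_lt.resolve_right fun hlt => ?_
  have hx : x c = 1 := (hfp.share_le_one c).eq_or_lt.resolve_right fun h =>
    hlt.ne (hfp.mul_value_eq_of_share_lt_one hv hc h)
  rw [hx, one_mul, hfp.value_eq_subtreeMax_of_share_eq_one hv (hch c hc) hx, hM] at hlt
  exact hlt.not_ge (hfp.value_le_subtreeMax_of_children hv hch (not_isLeaf_of_mem_children hc))

/-- If `c` tied with a child `d` holding a best leaf, `d` would not strictly outbid its
siblings, so its share would be `1` and `w s = w d = T.subtreeMax v s`. -/
lemma mul_value_lt_of_subtreeMax_lt (hfp : IsTreeFixedPoint T v x w)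
    (hv : ∀ l, T.IsLeaf l → 0 < v l) (hch : ∀ c ∈ T.children s, T.IsEfficientAt v x w c)
    (hc : c ∈ T.children s) (hM : T.subtreeMax v c < T.subtreeMax v s) :
    x c * w c < w s := by
  refine (hfp.mul_value_le hc).lt_of_ne fun htie => ?_
  obtain ⟨d, hd, hMd⟩ :=
    exists_mem_children_subtreeMax_eq (fun l hl => (hv l hl).le) (not_isLeaf_of_mem_children hc)
  have hdc : d ≠ c := by
    rintro rfl
    exact hM.ne hMd
  have hwd := hfp.mul_value_eq_of_subtreeMax_eq hv hch hd hMd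
  have hxd : x d = 1 := (hfp.share_le_one d).eq_or_lt.resolve_right fun h => by
    have hcd : x c * w c ≤ wexcl T x w s d :=
      le_fmax (f := fun t => x t * w t) (Finset.mem_erase.2 ⟨hdc.symm, hc⟩)
    linarith [hfp.wexcl_lt_of_share_lt_one hv hd h]
  refine lt_irrefl (T.subtreeMax v s) ?_
  calc T.subtreeMax v s = w d := (hMd.symm.trans
        (hfp.value_eq_subtreeMax_of_share_eq_one hv (hch d hd) hxd).symm)
    _ = w s := by rw [← hwd, hxd, one_mul]
    _ = x c * w c := htie.symm
    _ ≤ w c := mul_le_of_le_one_left (hfp.value_pos hv c).le (hfp.share_le_one c)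
    _ ≤ T.subtreeMax v c := hfp.value_le_subtreeMax hv (hch c hc)
    _ < T.subtreeMax v s := hM

lemma isEfficientAt_of_children (hfp : IsTreeFixedPoint T v x w)
    (hv : ∀ l, T.IsLeaf l → 0 < v l) (hch : ∀ c ∈ T.children s, T.IsEfficientAt v x w c)
    (hs : ¬ T.IsLeaf s) : T.IsEfficientAt v x w s := by
  intro l hl
  obtain ⟨hleaf, hls⟩ := mem_leavesBelow.1 hl
  obtain ⟨c, hc, hlc⟩ := exists_mem_children_le_of_lt (hls.lt_of_ne fun h => hs (h ▸ hleaf))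
  have hlc' : l ∈ T.leavesBelow c := mem_leavesBelow.2 ⟨hleaf, hlc⟩
  have hMcs := subtreeMax_mono (v := v) (covBy_of_mem_children hc).le
  have hvc := le_subtreeMax (v := v) hlc'
  rw [offer_eq_mul_offer hc hlc]
  constructor
  · intro hvl
    have hM : T.subtreeMax v c = T.subtreeMax v s := hMcs.antisymm (hvl ▸ hvc)
    rw [(hch c hc l hlc').1 (hvl.trans hM.symm), hfp.mul_value_eq_of_subtreeMax_eq hv hch hc hM]
  · intro hvl
    rcases hvc.eq_or_lt with heq | hlt
    · rw [(hch c hc l hlc').1 heq]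
      exact hfp.mul_value_lt_of_subtreeMax_lt hv hch hc (heq ▸ hvl)
    · calc x c * T.offer v x l c < x c * w c :=
          mul_lt_mul_of_pos_left ((hch c hc l hlc').2 hlt) (hfp.share_pos hv (mem_children.1 hc).1)
        _ ≤ w s := hfp.mul_value_le hc

lemma isEfficientAt (hfp : IsTreeFixedPoint T v x w) (hv : ∀ l, T.IsLeaf l → 0 < v l)
    (s : T.V) : T.IsEfficientAt v x w s := by
  induction s using WellFoundedLT.induction with
  | ind s ih =>
    by_cases hs : T.IsLeaf s
    · exact hfp.isEfficientAt_of_isLeaf hv hs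
    · exact hfp.isEfficientAt_of_children hv (fun c hc => ih c (covBy_of_mem_children hc).lt) hs

end IsTreeFixedPoint

theorem tree_fixed_point_efficient_general (T : BTree) (v x w : T.V → ℝ)
    (hv : ∀ l, T.IsLeaf l → 0 < v l)
    (hfp : IsTreeFixedPoint T v x w)
    (lstar : T.V) (hlstar : T.IsLeaf lstar)
    (hmax : ∀ l, T.IsLeaf l → v l ≤ v lstar)
    (l : T.V) (hl : T.IsLeaf l) (hlt : v l < v lstar) :
    v l * pathProd T x l < v lstar * pathProd T x lstar := by
  have hmem : ∀ {l}, T.IsLeaf l → l ∈ T.leavesBelow T.root :=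
    fun hl => mem_leavesBelow.2 ⟨hl, le_root _⟩
  have hM : T.subtreeMax v T.root = v lstar :=
    (fmax_le (hv lstar hlstar).le fun l hl => hmax l (mem_leavesBelow.1 hl).1).antisymm
      (le_subtreeMax (hmem hlstar))
  have heff := hfp.isEfficientAt hv T.root
  rw [mul_pathProd_eq_offer_root, mul_pathProd_eq_offer_root, (heff lstar (hmem hlstar)).1 hM.symm]
  exact (heff l (hmem hl)).2 (hM ▸ hlt)

/-- Efficiency of fixed points: a maximum-value leaf makes a strictly higher
offer to the seller than any leaf of smaller value. -/
theorem tree_fixed_point_efficient (T : BTree) (v x w : T.V → ℝ)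
    (hv : ∀ l, T.IsLeaf l → 0 < v l) (hroot : ¬ T.IsLeaf T.root)
    (hfp : IsTreeFixedPoint T v x w)
    (lstar : T.V) (hlstar : T.IsLeaf lstar)
    (hmax : ∀ l, T.IsLeaf l → v l ≤ v lstar)
    (l : T.V) (hl : T.IsLeaf l) (hlt : v l < v lstar) :
    v l * pathProd T x l < v lstar * pathProd T x lstar :=
  tree_fixed_point_efficient_general T v x w hv hfp lstar hlstar hmax l hl hlt
end
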